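/- Let G = ⟨i·I, X₁X₂, X₃X₄, Z₁Z₃, Z₂Z₄⟩ ≤ P_4 be the gauge group of the distance-two Bacon-Shor code, whose center satisfies Z(G) = ⟨i·I⟩·⟨X₁X₂X₃X₄, Z₁Z₂Z₃Z₄⟩. Consider the period-4 schedule measuring the single Paulis X₁X₂, Z₂Z₄, X₃X₄, Z₁Z₃ at timesteps t ≡ 0, 1, 2, 3 (mod 4) respectively, with post-selected outcomes +1 and instantaneous stabilizer groups obtained from the trivial group via the update S ↦ ⟨p⟩·(S ∩ C(p)). Then for all t ≥ 0 the instantaneous stabilizer group is S_t = ⟨X₁X₂⟩, ⟨Z₂Z₄⟩, ⟨X₃X₄⟩, or ⟨Z₁Z₃⟩ according as t ≡ 0, 1, 2, 3 (mod 4), and X₁X₂X₃X₄ ∉ ⟨i·I⟩·S_t for every t; hence this schedule is not an associated ISG code for G (the image of the stabilizer group S of the subsystem code modulo phases is never contained in S_t modulo phases). -/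

import Mathlib

open Matrix

noncomputable section

/-- The space of operators on `ι`-many qubits: matrices whose rows and columns are
indexed by bit strings `ι → Fin 2`, with complex entries. -/
abbrev PMat (ι : Type) [Fintype ι] [DecidableEq ι] : Type :=
  Matrix (ι → Fin 2) (ι → Fin 2) ℂ

variable (ι : Type) [Fintype ι] [DecidableEq ι]

lemma fin2_add_one_add_one : ∀ a : Fin 2, a + 1 + 1 = a := by decide

/-- The matrix of the operator `X k`, which flips the `k`-th bit of a basis state. -/
def XMat (k : ι) : PMat ι :=
  Matrix.of fun x y => if y = Function.update x k (x k + 1) then (1 : ℂ) else 0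

/-- The matrix of the operator `Z k`, which multiplies the basis state `x` by `(-1) ^ (x k)`. -/
def ZMat (k : ι) : PMat ι :=
  Matrix.diagonal fun x => (-1 : ℂ) ^ (x k : ℕ)

lemma XMat_mul_self (k : ι) : XMat ι k * XMat ι k = 1 := by
  have hinv : ∀ x : ι → Fin 2,
      Function.update (Function.update x k (x k + 1)) k
        (Function.update x k (x k + 1) k + 1) = x := by
    intro x
    ext j
    rcases eq_or_ne j k with rfl | h
    · simp [fin2_add_one_add_one]
    · simp [Function.update_of_ne h]
  ext x z
  rw [Matrix.mul_apply]
  simp only [XMat, Matrix.of_apply, ite_mul, one_mul, zero_mul]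
  rw [Finset.sum_ite_eq' Finset.univ (Function.update x k (x k + 1))
    (fun y => if z = Function.update y k (y k + 1) then (1 : ℂ) else 0)]
  simp [Matrix.one_apply, fin2_add_one_add_one, Function.update_eq_self, eq_comm]

lemma ZMat_mul_self (k : ι) : ZMat ι k * ZMat ι k = 1 := by
  have h : (fun i : ι → Fin 2 => (-1 : ℂ) ^ (i k : ℕ) * (-1) ^ (i k : ℕ)) = fun _ => 1 := by
    funext x
    rw [← pow_add, ← two_mul, pow_mul, neg_one_sq, one_pow]
  rw [ZMat, Matrix.diagonal_mul_diagonal, h, Matrix.diagonal_one]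

lemma iMat_mul : (Complex.I • (1 : PMat ι)) * ((-Complex.I) • (1 : PMat ι)) = 1 := by
  rw [smul_mul_smul_comm]
  simp [Complex.I_mul_I]

lemma iMat_mul' : ((-Complex.I) • (1 : PMat ι)) * (Complex.I • (1 : PMat ι)) = 1 := by
  rw [smul_mul_smul_comm]
  simp [Complex.I_mul_I]

/-- The scalar `i·I`, as a unit. -/
def iU : (PMat ι)ˣ := ⟨Complex.I • 1, (-Complex.I) • 1, iMat_mul ι, iMat_mul' ι⟩

/-- The operator `X k`, as a unit. -/
def XU (k : ι) : (PMat ι)ˣ := ⟨XMat ι k, XMat ι k, XMat_mul_self ι k, XMat_mul_self ι k⟩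

/-- The operator `Z k`, as a unit. -/
def ZU (k : ι) : (PMat ι)ˣ := ⟨ZMat ι k, ZMat ι k, ZMat_mul_self ι k, ZMat_mul_self ι k⟩

/-- The Pauli group on the qubits indexed by `ι`: the subgroup of invertible operators
generated by `i·I` and the `X k` and `Z k`. -/
def PauliGroup : Subgroup (PMat ι)ˣ :=
  Subgroup.closure ({iU ι} ∪ Set.range (XU ι) ∪ Set.range (ZU ι))

/-- The phase-free "almost Pauli group" `⟨X 1, Z 1, …, X n, Z n⟩`. -/
def PauliGroupNP : Subgroup (PMat ι)ˣ :=
  Subgroup.closure (Set.range (XU ι) ∪ Set.range (ZU ι))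

lemma iU_mem : iU ι ∈ PauliGroup ι :=
  Subgroup.subset_closure (Or.inl (Or.inl rfl))

lemma XU_mem (k : ι) : XU ι k ∈ PauliGroup ι :=
  Subgroup.subset_closure (Or.inl (Or.inr ⟨k, rfl⟩))

lemma ZU_mem (k : ι) : ZU ι k ∈ PauliGroup ι :=
  Subgroup.subset_closure (Or.inr ⟨k, rfl⟩)

lemma XU_memNP (k : ι) : XU ι k ∈ PauliGroupNP ι :=
  Subgroup.subset_closure (Or.inl ⟨k, rfl⟩)

lemma ZU_memNP (k : ι) : ZU ι k ∈ PauliGroupNP ι :=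
  Subgroup.subset_closure (Or.inr ⟨k, rfl⟩)

/-- A stabilizer group: a subgroup of the Pauli group not containing `-I`. -/
structure IsStabilizer (S : Subgroup (PMat ι)ˣ) : Prop where
  le : S ≤ PauliGroup ι
  neg_one_notMem : (-1 : (PMat ι)ˣ) ∉ S

/-- A subgroup has rank `r` if it admits a generating set of size `r` and no smaller one. -/
def HasRank {G : Type*} [Group G] (S : Subgroup G) (r : ℕ) : Prop :=
  (∃ T : Finset G, Subgroup.closure (T : Set G) = S ∧ T.card = r) ∧
    ∀ T : Finset G, Subgroup.closure (T : Set G) = S → r ≤ T.card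

/-- The normalizer `N(S) = {p ∈ P_n : p S p⁻¹ = S}` of `S` in the Pauli group. -/
def NormIn (S : Subgroup (PMat ι)ˣ) : Subgroup (PMat ι)ˣ :=
  Subgroup.normalizer (S : Set (PMat ι)ˣ) ⊓ PauliGroup ι

/-- The centralizer `C(S) = {p ∈ P_n : ∀ s ∈ S, p s = s p}` of `S` in the Pauli group. -/
def CentIn (S : Subgroup (PMat ι)ˣ) : Subgroup (PMat ι)ˣ :=
  Subgroup.centralizer (S : Set (PMat ι)ˣ) ⊓ PauliGroup ι

instance normIn_normal (S : Subgroup (PMat ι)ˣ) : (S.subgroupOf (NormIn ι S)).Normal := by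
  constructor
  intro x hx g
  rw [Subgroup.mem_subgroupOf] at hx ⊢
  have hg : (g : (PMat ι)ˣ) ∈ Subgroup.normalizer (S : Set (PMat ι)ˣ) := (Subgroup.mem_inf.mp g.2).1
  have h := (Subgroup.mem_normalizer_iff.mp hg (x : (PMat ι)ˣ)).mp hx
  simpa using h

/-- The logical Pauli group `N(S)/S`. -/
abbrev LogicalGroup (S : Subgroup (PMat ι)ˣ) :=
  ↥(NormIn ι S) ⧸ S.subgroupOf (NormIn ι S)

/-- A Pauli is Hermitian if its matrix equals its conjugate transpose. -/
def IsHermitianPauli (p : (PMat ι)ˣ) : Prop := (p : PMat ι).IsHermitian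

/-- The weight of a Pauli: the number of qubits on which it acts non-trivially,
i.e. on which it fails to commute with `X k` or with `Z k`. -/
def weight (p : (PMat ι)ˣ) : ℕ :=
  Nat.card {k : ι // ¬(Commute p (XU ι k) ∧ Commute p (ZU ι k))}

/-- The effect on a stabilizer group of measuring the Hermitian Pauli `p`,
post-selecting the outcome `+1`: `S ↦ ⟨p⟩·(S ∩ C(p))`. -/
def measUpdate (p : (PMat ι)ˣ) (S : Subgroup (PMat ι)ˣ) : Subgroup (PMat ι)ˣ :=
  Subgroup.closure {p} ⊔ (S ⊓ Subgroup.centralizer {p})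

lemma iU_central (A : (PMat ι)ˣ) : iU ι * A = A * iU ι := by
  apply Units.ext
  show (Complex.I • (1 : PMat ι)) * (A : PMat ι) = (A : PMat ι) * (Complex.I • 1)
  rw [smul_mul_assoc, one_mul, mul_smul_comm, mul_one]

lemma iU_mem_normIn (S : Subgroup (PMat ι)ˣ) : iU ι ∈ NormIn ι S := by
  refine Subgroup.mem_inf.mpr ⟨?_, iU_mem ι⟩
  rw [Subgroup.mem_normalizer_iff]
  intro h
  have : iU ι * h * (iU ι)⁻¹ = h := by
    rw [iU_central ι h, mul_assoc, mul_inv_cancel, mul_one]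
  rw [this]


/-- The operator `X₁X₂` on four qubits. -/
def XX12 : (PMat (Fin 4))ˣ := XU (Fin 4) 0 * XU (Fin 4) 1
/-- The operator `X₃X₄` on four qubits. -/
def XX34 : (PMat (Fin 4))ˣ := XU (Fin 4) 2 * XU (Fin 4) 3
/-- The operator `Z₁Z₃` on four qubits. -/
def ZZ13 : (PMat (Fin 4))ˣ := ZU (Fin 4) 0 * ZU (Fin 4) 2
/-- The operator `Z₂Z₄` on four qubits. -/
def ZZ24 : (PMat (Fin 4))ˣ := ZU (Fin 4) 1 * ZU (Fin 4) 3

/-- One even timestep of the distance-two Bacon-Shor schedule: measure `X₁X₂`, then `X₃X₄`. -/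
def bsStepX (S : Subgroup (PMat (Fin 4))ˣ) : Subgroup (PMat (Fin 4))ˣ :=
  measUpdate (Fin 4) XX34 (measUpdate (Fin 4) XX12 S)

/-- One odd timestep of the distance-two Bacon-Shor schedule: measure `Z₁Z₃`, then `Z₂Z₄`. -/
def bsStepZ (S : Subgroup (PMat (Fin 4))ˣ) : Subgroup (PMat (Fin 4))ˣ :=
  measUpdate (Fin 4) ZZ24 (measUpdate (Fin 4) ZZ13 S)

/-- The instantaneous stabilizer groups of the distance-two Bacon-Shor schedule, with
`S_{-1} = {I}` the trivial group (here `bsISG t` is `S_t` for `t ≥ 0`). -/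
def bsISG : ℕ → Subgroup (PMat (Fin 4))ˣ
  | 0 => bsStepX ⊥
  | t + 1 => if (t + 1) % 2 = 0 then bsStepX (bsISG t) else bsStepZ (bsISG t)

/-- The gauge group of the distance-two Bacon-Shor code. -/
def bsG : Subgroup (PMat (Fin 4))ˣ :=
  Subgroup.closure {iU (Fin 4), XX12, XX34, ZZ13, ZZ24}

/-- The Pauli measured at timestep `t` of the period-4 single-measurement schedule. -/
def badMeas (t : ℕ) : (PMat (Fin 4))ˣ :=
  if t % 4 = 0 then XX12 else if t % 4 = 1 then ZZ24 else if t % 4 = 2 then XX34 else ZZ13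

/-- The instantaneous stabilizer groups of the period-4 single-measurement schedule. -/
def badISG : ℕ → Subgroup (PMat (Fin 4))ˣ
  | 0 => measUpdate (Fin 4) (badMeas 0) ⊥
  | t + 1 => measUpdate (Fin 4) (badMeas (t + 1)) (badISG t)

section Aux
variable {ι : Type} [Fintype ι] [DecidableEq ι]

lemma XMat_mul_apply (k : ι) (M : PMat ι) (x y : ι → Fin 2) :
    (XMat ι k * M) x y = M (Function.update x k (x k + 1)) y := by
  rw [Matrix.mul_apply]
  simp only [XMat, Matrix.of_apply]
  rw [Finset.sum_eq_single (Function.update x k (x k + 1))]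
  · simp
  · intro b _ hb; simp [XMat, hb]
  · intro h; exact absurd (Finset.mem_univ _) h

lemma XMat_apply (k : ι) (x y : ι → Fin 2) :
    XMat ι k x y = if y = Function.update x k (x k + 1) then (1:ℂ) else 0 := rfl

lemma neg_pow_fin2 : ∀ a : Fin 2, ((-1:ℂ))^(((a+1 : Fin 2)):ℕ) = -(-1)^(a:ℕ) := by
  intro a; fin_cases a <;> simp

lemma ZMat_mul_XMat (k : ι) : ZMat ι k * XMat ι k = -(XMat ι k * ZMat ι k) := by
  ext x y
  rw [Matrix.neg_apply, XMat_mul_apply, ZMat, Matrix.diagonal_mul, XMat_apply,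
    Matrix.diagonal_apply]
  rcases eq_or_ne y (Function.update x k (x k + 1)) with rfl | h
  · simp [Function.update_self, neg_pow_fin2]
  · simp [h, Ne.symm h]

lemma XMat_mul_ZMat_comm {j k : ι} (h : j ≠ k) :
    XMat ι j * ZMat ι k = ZMat ι k * XMat ι j := by
  ext x y
  rw [XMat_mul_apply, ZMat, Matrix.diagonal_mul, XMat_apply, Matrix.diagonal_apply]
  rcases eq_or_ne y (Function.update x j (x j + 1)) with rfl | hy
  · simp [Function.update_of_ne (Ne.symm h)]
  · simp [hy, Ne.symm hy]

lemma XMat_mul_XMat_comm (j k : ι) :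
    XMat ι j * XMat ι k = XMat ι k * XMat ι j := by
  rcases eq_or_ne j k with rfl | h
  · rfl
  · ext x y
    rw [XMat_mul_apply, XMat_mul_apply, XMat_apply, XMat_apply]
    have : Function.update (Function.update x j (x j + 1)) k
        ((Function.update x j (x j + 1)) k + 1) =
        Function.update (Function.update x k (x k + 1)) j
        ((Function.update x k (x k + 1)) j + 1) := by
      rw [Function.update_of_ne (Ne.symm h), Function.update_of_ne h,
        Function.update_comm h]
    rw [this]

lemma ZMat_mul_ZMat_comm (j k : ι) :
    ZMat ι j * ZMat ι k = ZMat ι k * ZMat ι j := by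
  rw [ZMat, ZMat, Matrix.diagonal_mul_diagonal, Matrix.diagonal_mul_diagonal]
  simp [mul_comm]

end Aux
section Aux2
variable {ι : Type} [Fintype ι] [DecidableEq ι]

lemma XU_mul_self (k : ι) : XU ι k * XU ι k = 1 :=
  Units.ext (XMat_mul_self ι k)

lemma ZU_mul_self (k : ι) : ZU ι k * ZU ι k = 1 :=
  Units.ext (ZMat_mul_self ι k)

lemma neg_one_ne_one_unit [Nonempty ι] : (-1 : (PMat ι)ˣ) ≠ 1 := by
  intro h
  have h1 : ((-1 : (PMat ι)ˣ) : PMat ι) = ((1 : (PMat ι)ˣ) : PMat ι) := by rw [h]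
  rw [Units.val_neg, Units.val_one] at h1
  have h2 := congrFun (congrFun h1 (fun _ => 0)) (fun _ => 0)
  rw [Matrix.neg_apply, Matrix.one_apply_eq] at h2
  norm_num at h2

lemma iU_sq : (iU ι) * (iU ι) = -1 := by
  apply Units.ext
  show (Complex.I • (1 : PMat ι)) * (Complex.I • 1) = _
  rw [smul_mul_smul_comm, one_mul, Complex.I_mul_I, Units.val_neg, Units.val_one,
    neg_smul, one_smul]

/-- sign-commutation: `SC s a b` means `a*b = b*a` (s = false) or `a*b = -(b*a)` (s = true). -/
def SC {G : Type*} [Monoid G] [HasDistribNeg G] (s : Bool) (a b : G) : Prop :=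
  a * b = cond s (-(b * a)) (b * a)

lemma SC.symm {G : Type*} [Monoid G] [HasDistribNeg G] {s : Bool} {a b : G}
    (h : SC s a b) : SC s b a := by
  cases s
  · have h' : a * b = b * a := h
    exact Eq.symm h'
  · have h' : a * b = -(b * a) := h
    show b * a = -(a * b)
    rw [h', neg_neg]

lemma SC.mul_left {G : Type*} [Monoid G] [HasDistribNeg G] {s t : Bool} {a b c : G}
    (ha : SC s a c) (hb : SC t b c) : SC (xor s t) (a * b) c := by
  cases s <;> cases t
  · have ha' : a * c = c * a := ha
    have hb' : b * c = c * b := hb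
    show a * b * c = c * (a * b)
    rw [mul_assoc, hb', ← mul_assoc, ha', mul_assoc]
  · have ha' : a * c = c * a := ha
    have hb' : b * c = -(c * b) := hb
    show a * b * c = -(c * (a * b))
    rw [mul_assoc, hb', mul_neg, ← mul_assoc, ha', mul_assoc]
  · have ha' : a * c = -(c * a) := ha
    have hb' : b * c = c * b := hb
    show a * b * c = -(c * (a * b))
    rw [mul_assoc, hb', ← mul_assoc, ha', neg_mul, mul_assoc]
  · have ha' : a * c = -(c * a) := ha
    have hb' : b * c = -(c * b) := hb
    show a * b * c = c * (a * b)
    rw [mul_assoc, hb', mul_neg, ← mul_assoc, ha', neg_mul, neg_neg, mul_assoc]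

lemma SC.mul_right {G : Type*} [Monoid G] [HasDistribNeg G] {s t : Bool} {a b c : G}
    (hb : SC s a b) (hc : SC t a c) : SC (xor s t) a (b * c) :=
  (SC.mul_left hb.symm hc.symm).symm

lemma SC.commute {G : Type*} [Monoid G] [HasDistribNeg G] {a b : G}
    (h : SC false a b) : Commute a b := by
  have h' : a * b = b * a := h
  exact h' 

lemma sc_XU_XU (j k : ι) : SC false (XU ι j) (XU ι k) :=
  Units.ext (XMat_mul_XMat_comm j k)

lemma sc_ZU_ZU (j k : ι) : SC false (ZU ι j) (ZU ι k) :=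
  Units.ext (ZMat_mul_ZMat_comm j k)

lemma sc_XU_ZU_ne {j k : ι} (h : j ≠ k) : SC false (XU ι j) (ZU ι k) :=
  Units.ext (XMat_mul_ZMat_comm h)

lemma sc_ZU_XU_ne {j k : ι} (h : j ≠ k) : SC false (ZU ι j) (XU ι k) :=
  (sc_XU_ZU_ne (Ne.symm h)).symm

lemma sc_ZU_XU (k : ι) : SC true (ZU ι k) (XU ι k) := by
  show ZU ι k * XU ι k = -(XU ι k * ZU ι k)
  apply Units.ext
  rw [Units.val_neg]
  exact ZMat_mul_XMat k

lemma sc_XU_ZU (k : ι) : SC true (XU ι k) (ZU ι k) := (sc_ZU_XU k).symm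

end Aux2
section Aux3

lemma sq_of_mul {G : Type*} [Monoid G] {a b : G} (ha : a * a = 1) (hb : b * b = 1)
    (hc : Commute b a) : (a * b) * (a * b) = 1 := by
  rw [mul_assoc, ← mul_assoc b a b, hc.eq, mul_assoc a b b, hb, mul_one, ha]

lemma sq_XX12 : XX12 * XX12 = 1 :=
  sq_of_mul (XU_mul_self (0 : Fin 4)) (XU_mul_self (1 : Fin 4)) (sc_XU_XU (1 : Fin 4) 0).commute
lemma sq_XX34 : XX34 * XX34 = 1 :=
  sq_of_mul (XU_mul_self (2 : Fin 4)) (XU_mul_self (3 : Fin 4)) (sc_XU_XU (3 : Fin 4) 2).commute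
lemma sq_ZZ13 : ZZ13 * ZZ13 = 1 :=
  sq_of_mul (ZU_mul_self (0 : Fin 4)) (ZU_mul_self (2 : Fin 4)) (sc_ZU_ZU (2 : Fin 4) 0).commute
lemma sq_ZZ24 : ZZ24 * ZZ24 = 1 :=
  sq_of_mul (ZU_mul_self (1 : Fin 4)) (ZU_mul_self (3 : Fin 4)) (sc_ZU_ZU (3 : Fin 4) 1).commute

lemma sc_XX12_XX34 : SC false XX12 XX34 :=
  SC.mul_left (SC.mul_right (sc_XU_XU (0 : Fin 4) 2) (sc_XU_XU (0 : Fin 4) 3))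
    (SC.mul_right (sc_XU_XU (1 : Fin 4) 2) (sc_XU_XU (1 : Fin 4) 3))
lemma sc_ZZ13_ZZ24 : SC false ZZ13 ZZ24 :=
  SC.mul_left (SC.mul_right (sc_ZU_ZU (0 : Fin 4) 1) (sc_ZU_ZU (0 : Fin 4) 3))
    (SC.mul_right (sc_ZU_ZU (2 : Fin 4) 1) (sc_ZU_ZU (2 : Fin 4) 3))

lemma sc_XX12_ZZ13 : SC true XX12 ZZ13 :=
  SC.mul_left (SC.mul_right (sc_XU_ZU (0 : Fin 4)) (sc_XU_ZU_ne (ι := Fin 4) (by decide)))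
    (SC.mul_right (sc_XU_ZU_ne (ι := Fin 4) (by decide)) (sc_XU_ZU_ne (ι := Fin 4) (by decide)))
lemma sc_XX12_ZZ24 : SC true XX12 ZZ24 :=
  SC.mul_left (SC.mul_right (sc_XU_ZU_ne (ι := Fin 4) (by decide)) (sc_XU_ZU_ne (ι := Fin 4) (by decide)))
    (SC.mul_right (sc_XU_ZU (1 : Fin 4)) (sc_XU_ZU_ne (ι := Fin 4) (by decide)))
lemma sc_XX34_ZZ13 : SC true XX34 ZZ13 :=
  SC.mul_left (SC.mul_right (sc_XU_ZU_ne (ι := Fin 4) (by decide)) (sc_XU_ZU (2 : Fin 4)))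
    (SC.mul_right (sc_XU_ZU_ne (ι := Fin 4) (by decide)) (sc_XU_ZU_ne (ι := Fin 4) (by decide)))
lemma sc_XX34_ZZ24 : SC true XX34 ZZ24 :=
  SC.mul_left (SC.mul_right (sc_XU_ZU_ne (ι := Fin 4) (by decide)) (sc_XU_ZU_ne (ι := Fin 4) (by decide)))
    (SC.mul_right (sc_XU_ZU_ne (ι := Fin 4) (by decide)) (sc_XU_ZU (3 : Fin 4)))

/-- anticommutation in `eq` form -/
lemma SC.ac {G : Type*} [Monoid G] [HasDistribNeg G] {a b : G} (h : SC true a b) :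
    a * b = -(b * a) := h

lemma ac_pow {G : Type*} [Monoid G] [HasDistribNeg G] {a b : G} (h : b * a = -(a * b)) :
    ∀ n : ℕ, b * a ^ n = (-1) ^ n * (a ^ n * b)
  | 0 => by simp
  | n + 1 => by
    rw [pow_succ a n, ← mul_assoc, ac_pow h n, mul_assoc ((-1)^n) _ a,
      mul_assoc (a^n) b a, h, pow_succ (-1 : G) n]
    simp only [mul_neg, neg_mul, mul_one, neg_neg, mul_assoc]

lemma ac_pow_pow {G : Type*} [Monoid G] [HasDistribNeg G] {a b : G} (h : b * a = -(a * b)) :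
    ∀ (m n : ℕ), b ^ m * a ^ n = (-1) ^ (m * n) * (a ^ n * b ^ m)
  | 0, n => by simp
  | m + 1, n => by
    have hc : Commute (b ^ m) ((-1 : G) ^ n) := (Commute.neg_one_right (b ^ m)).pow_right n
    have he : n + m * n = (m + 1) * n := by ring
    calc b ^ (m + 1) * a ^ n = b ^ m * (b * a ^ n) := by rw [pow_succ, mul_assoc]
      _ = (b ^ m * (-1) ^ n) * (a ^ n * b) := by rw [ac_pow h n, mul_assoc]
      _ = (-1) ^ n * ((b ^ m * a ^ n) * b) := by
            rw [hc.eq, mul_assoc, ← mul_assoc (b ^ m)]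
      _ = (-1) ^ n * (((-1) ^ (m * n) * (a ^ n * b ^ m)) * b) := by rw [ac_pow_pow h m n]
      _ = (-1) ^ ((m + 1) * n) * (a ^ n * b ^ (m + 1)) := by
            rw [mul_assoc ((-1 : G) ^ (m * n)), ← mul_assoc ((-1 : G) ^ n), ← pow_add,
              mul_assoc (a ^ n), ← pow_succ, he]

end Aux3
section Aux4

abbrev bitlo : Fin 4 → Fin 2 := fun _ => 0
abbrev bithi : Fin 4 → Fin 2 := fun _ => 1

lemma mem_closure_singleton_of_sq {G : Type*} [Group G] {p x : G} (hp : p * p = 1)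
    (hx : x ∈ Subgroup.closure {p}) : x = 1 ∨ x = p := by
  rw [← Subgroup.zpowers_eq_closure] at hx
  obtain ⟨n, rfl⟩ := hx
  have h2 : p ^ (2 : ℤ) = 1 := by rw [zpow_two, hp]
  rcases Int.even_or_odd n with ⟨m, rfl⟩ | ⟨m, rfl⟩
  · left
    have hmm : m + m = 2 * m := by ring
    show p ^ (m + m) = 1
    rw [hmm, _root_.zpow_mul, h2, _root_.one_zpow]
  · right
    show p ^ (2 * m + 1) = p
    rw [_root_.zpow_add, _root_.zpow_mul, h2, _root_.one_zpow, one_mul, zpow_one]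

lemma eq_one_of_eq_neg_self {u : (PMat (Fin 4))ˣ} (h : u = -u) : False := by
  have h1 : u⁻¹ * u = u⁻¹ * (-u) := by rw [← h]
  rw [inv_mul_cancel, mul_neg, inv_mul_cancel] at h1
  exact neg_one_ne_one_unit h1.symm

lemma measUpdate_closure {p q : (PMat (Fin 4))ˣ} (hp : p * p = 1)
    (hac : p * q = -(q * p)) :
    measUpdate (Fin 4) q (Subgroup.closure {p}) = Subgroup.closure {q} := by
  have hinf : Subgroup.closure {p} ⊓ Subgroup.centralizer {q} = ⊥ := by
    rw [eq_bot_iff]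
    intro x hx
    obtain ⟨hx1, hx2⟩ := Subgroup.mem_inf.mp hx
    rcases mem_closure_singleton_of_sq hp hx1 with h1 | h1
    · rw [h1]; exact Subgroup.mem_bot.mpr rfl
    · exfalso
      have hc : p * q = q * p := by
        rw [← h1]; exact Subgroup.mem_centralizer_singleton_iff.mp hx2
      rw [hc] at hac
      exact eq_one_of_eq_neg_self hac
  simp only [measUpdate]
  rw [hinf, sup_bot_eq]

lemma measUpdate_bot (q : (PMat (Fin 4))ˣ) :
    measUpdate (Fin 4) q ⊥ = Subgroup.closure {q} := by
  simp only [measUpdate]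
  rw [bot_inf_eq, sup_bot_eq]

lemma sq_badMeas (t : ℕ) : badMeas t * badMeas t = 1 := by
  unfold badMeas
  split_ifs
  · exact sq_XX12
  · exact sq_ZZ24
  · exact sq_XX34
  · exact sq_ZZ13

lemma badMeas_ac (t : ℕ) : badMeas t * badMeas (t + 1) = -(badMeas (t + 1) * badMeas t) := by
  have h4 : t % 4 = 0 ∨ t % 4 = 1 ∨ t % 4 = 2 ∨ t % 4 = 3 := by omega
  rcases h4 with h | h | h | h
  · have h' : (t + 1) % 4 = 1 := by omega
    simp only [badMeas, h, h']
    norm_num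
    exact sc_XX12_ZZ24.ac
  · have h' : (t + 1) % 4 = 2 := by omega
    simp only [badMeas, h, h']
    norm_num
    exact sc_XX34_ZZ24.symm.ac
  · have h' : (t + 1) % 4 = 3 := by omega
    simp only [badMeas, h, h']
    norm_num
    exact sc_XX34_ZZ13.ac
  · have h' : (t + 1) % 4 = 0 := by omega
    simp only [badMeas, h, h']
    norm_num
    exact sc_XX12_ZZ13.symm.ac

lemma badISG_eq (t : ℕ) : badISG t = Subgroup.closure {badMeas t} := by
  induction t with
  | zero => rw [badISG, measUpdate_bot]
  | succ t ih =>
    rw [badISG, ih, measUpdate_closure (sq_badMeas t) (badMeas_ac t)]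

end Aux4
section Aux5

lemma bitlo_ne_bithi : bitlo ≠ bithi := by
  intro h
  exact absurd (congrFun h 0) (by decide)

/-- the four-qubit X operator in the form used in the theorem statement -/
lemma XXXX_entry :
    ((XU (Fin 4) 0 * XU (Fin 4) 1 * XU (Fin 4) 2 * XU (Fin 4) 3 : (PMat (Fin 4))ˣ) :
      PMat (Fin 4)) bitlo bithi = 1 := by
  show (XMat (Fin 4) 0 * XMat (Fin 4) 1 * XMat (Fin 4) 2 * XMat (Fin 4) 3) bitlo bithi = 1
  rw [mul_assoc, mul_assoc, XMat_mul_apply, XMat_mul_apply, XMat_mul_apply, XMat_apply,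
    if_pos (by decide)]

lemma XX12_entry : ((XX12 : (PMat (Fin 4))ˣ) : PMat (Fin 4)) bitlo bithi = 0 := by
  show (XMat (Fin 4) 0 * XMat (Fin 4) 1) bitlo bithi = 0
  rw [XMat_mul_apply, XMat_apply, if_neg (by decide)]

lemma XX34_entry : ((XX34 : (PMat (Fin 4))ˣ) : PMat (Fin 4)) bitlo bithi = 0 := by
  show (XMat (Fin 4) 2 * XMat (Fin 4) 3) bitlo bithi = 0
  rw [XMat_mul_apply, XMat_apply, if_neg (by decide)]

lemma ZZ13_entry : ((ZZ13 : (PMat (Fin 4))ˣ) : PMat (Fin 4)) bitlo bithi = 0 := by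
  show (ZMat (Fin 4) 0 * ZMat (Fin 4) 2) bitlo bithi = 0
  rw [ZMat, ZMat, Matrix.diagonal_mul_diagonal]
  exact Matrix.diagonal_apply_ne _ bitlo_ne_bithi

lemma ZZ24_entry : ((ZZ24 : (PMat (Fin 4))ˣ) : PMat (Fin 4)) bitlo bithi = 0 := by
  show (ZMat (Fin 4) 1 * ZMat (Fin 4) 3) bitlo bithi = 0
  rw [ZMat, ZMat, Matrix.diagonal_mul_diagonal]
  exact Matrix.diagonal_apply_ne _ bitlo_ne_bithi

/-- units whose matrix is a scalar multiple of `1` or of `p` -/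
def scalarSpan (p : (PMat (Fin 4))ˣ) (hp : p * p = 1) : Subgroup (PMat (Fin 4))ˣ where
  carrier := {u | ∃ c : ℂ, (u : PMat (Fin 4)) = c • 1 ∨ (u : PMat (Fin 4)) = c • (p : PMat (Fin 4))}
  one_mem' := ⟨1, Or.inl (by simp)⟩
  mul_mem' := by
    rintro u v ⟨c, hc | hc⟩ ⟨d, hd | hd⟩ <;>
      refine ⟨c * d, ?_⟩ <;> rw [Units.val_mul, hc, hd, smul_mul_smul_comm]
    · exact Or.inl (by rw [one_mul])
    · exact Or.inr (by rw [one_mul])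
    · exact Or.inr (by rw [mul_one])
    · refine Or.inl ?_
      have : (p : PMat (Fin 4)) * (p : PMat (Fin 4)) = 1 := by
        rw [← Units.val_mul, hp, Units.val_one]
      rw [this]
  inv_mem' := by
    rintro u ⟨c, hc | hc⟩
    · have hc0 : c ≠ 0 := by
        rintro rfl
        have h1 := u.mul_inv
        rw [hc, zero_smul, zero_mul] at h1
        have h2 := congrFun (congrFun h1 bitlo) bitlo
        rw [Matrix.zero_apply, Matrix.one_apply_eq] at h2
        exact zero_ne_one h2
      refine ⟨c⁻¹, Or.inl ?_⟩
      have key : (u : PMat (Fin 4)) * (c⁻¹ • 1) = 1 := by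
        rw [hc, smul_mul_smul_comm, mul_inv_cancel₀ hc0, one_mul, one_smul]
      calc ((u⁻¹ : (PMat (Fin 4))ˣ) : PMat (Fin 4))
          = ↑u⁻¹ * ((u : PMat (Fin 4)) * (c⁻¹ • 1)) := by rw [key, mul_one]
        _ = (↑u⁻¹ * (u : PMat (Fin 4))) * (c⁻¹ • 1) := by rw [mul_assoc]
        _ = c⁻¹ • 1 := by rw [u.inv_mul, one_mul]
    · have hc0 : c ≠ 0 := by
        rintro rfl
        have h1 := u.mul_inv
        rw [hc, zero_smul, zero_mul] at h1
        have h2 := congrFun (congrFun h1 bitlo) bitlo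
        rw [Matrix.zero_apply, Matrix.one_apply_eq] at h2
        exact zero_ne_one h2
      refine ⟨c⁻¹, Or.inr ?_⟩
      have hpp : (p : PMat (Fin 4)) * (p : PMat (Fin 4)) = 1 := by
        rw [← Units.val_mul, hp, Units.val_one]
      have key : (u : PMat (Fin 4)) * (c⁻¹ • (p : PMat (Fin 4))) = 1 := by
        rw [hc, smul_mul_smul_comm, mul_inv_cancel₀ hc0, one_smul, hpp]
      calc ((u⁻¹ : (PMat (Fin 4))ˣ) : PMat (Fin 4))
          = ↑u⁻¹ * ((u : PMat (Fin 4)) * (c⁻¹ • (p : PMat (Fin 4)))) := by rw [key, mul_one]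
        _ = (↑u⁻¹ * (u : PMat (Fin 4))) * (c⁻¹ • (p : PMat (Fin 4))) := by rw [mul_assoc]
        _ = c⁻¹ • (p : PMat (Fin 4)) := by rw [u.inv_mul, one_mul]

lemma not_mem_iU_sup_closure {p : (PMat (Fin 4))ˣ} (hp : p * p = 1)
    (hent : ((p : (PMat (Fin 4))ˣ) : PMat (Fin 4)) bitlo bithi = 0) :
    XU (Fin 4) 0 * XU (Fin 4) 1 * XU (Fin 4) 2 * XU (Fin 4) 3 ∉
      Subgroup.closure {iU (Fin 4)} ⊔ Subgroup.closure {p} := by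
  intro hmem
  have hle : Subgroup.closure {iU (Fin 4)} ⊔ Subgroup.closure {p} ≤ scalarSpan p hp := by
    rw [← Subgroup.closure_union, Set.singleton_union, Subgroup.closure_le]
    rintro x (rfl | rfl)
    · exact ⟨Complex.I, Or.inl rfl⟩
    · exact ⟨1, Or.inr (one_smul ℂ _).symm⟩
  obtain ⟨c, hc | hc⟩ := hle hmem
  · have := congrFun (congrFun hc bitlo) bithi
    rw [XXXX_entry, Matrix.smul_apply, Matrix.one_apply_ne bitlo_ne_bithi] at this
    simp at this
  · have := congrFun (congrFun hc bitlo) bithi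
    rw [XXXX_entry, Matrix.smul_apply, hent] at this
    simp at this

lemma part3 (t : ℕ) :
    XU (Fin 4) 0 * XU (Fin 4) 1 * XU (Fin 4) 2 * XU (Fin 4) 3 ∉
      Subgroup.closure {iU (Fin 4)} ⊔ badISG t := by
  rw [badISG_eq]
  have h4 : t % 4 = 0 ∨ t % 4 = 1 ∨ t % 4 = 2 ∨ t % 4 = 3 := by omega
  rcases h4 with h | h | h | h <;> simp only [badMeas, h] <;> norm_num
  · exact not_mem_iU_sup_closure sq_XX12 XX12_entry
  · exact not_mem_iU_sup_closure sq_ZZ24 ZZ24_entry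
  · exact not_mem_iU_sup_closure sq_XX34 XX34_entry
  · exact not_mem_iU_sup_closure sq_ZZ13 ZZ13_entry

end Aux5
section Aux6

/-- `X₁X₂X₃X₄` -/
def XXp : (PMat (Fin 4))ˣ := XU (Fin 4) 0 * XU (Fin 4) 1 * XU (Fin 4) 2 * XU (Fin 4) 3
/-- `Z₁Z₂Z₃Z₄` -/
def ZZp : (PMat (Fin 4))ˣ := ZU (Fin 4) 0 * ZU (Fin 4) 1 * ZU (Fin 4) 2 * ZU (Fin 4) 3

/-- the center candidate -/
def Hgrp : Subgroup (PMat (Fin 4))ˣ := Subgroup.closure {iU (Fin 4), XXp, ZZp}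

lemma XXp_eq : XXp = XX12 * XX34 := by
  show XU (Fin 4) 0 * XU (Fin 4) 1 * XU (Fin 4) 2 * XU (Fin 4) 3
    = (XU (Fin 4) 0 * XU (Fin 4) 1) * (XU (Fin 4) 2 * XU (Fin 4) 3)
  rw [mul_assoc]

lemma ZZp_eq : ZZp = ZZ13 * ZZ24 := by
  show ZU (Fin 4) 0 * ZU (Fin 4) 1 * ZU (Fin 4) 2 * ZU (Fin 4) 3
    = (ZU (Fin 4) 0 * ZU (Fin 4) 2) * (ZU (Fin 4) 1 * ZU (Fin 4) 3)
  rw [mul_assoc (ZU (Fin 4) 0 * ZU (Fin 4) 1)]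
  exact ((sc_ZU_ZU (1 : Fin 4) 2).commute.mul_mul_mul_comm (ZU (Fin 4) 0) (ZU (Fin 4) 3))

lemma comm_XXp_XX12 : Commute XXp XX12 := by
  rw [XXp_eq]; exact Commute.mul_left (Commute.refl XX12) sc_XX12_XX34.commute.symm
lemma comm_XXp_XX34 : Commute XXp XX34 := by
  rw [XXp_eq]; exact Commute.mul_left sc_XX12_XX34.commute (Commute.refl XX34)
lemma comm_XXp_ZZ13 : Commute XXp ZZ13 := by
  rw [XXp_eq]; exact (SC.mul_left sc_XX12_ZZ13 sc_XX34_ZZ13).commute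
lemma comm_XXp_ZZ24 : Commute XXp ZZ24 := by
  rw [XXp_eq]; exact (SC.mul_left sc_XX12_ZZ24 sc_XX34_ZZ24).commute
lemma comm_ZZp_XX12 : Commute ZZp XX12 := by
  rw [ZZp_eq]; exact (SC.mul_left sc_XX12_ZZ13.symm sc_XX12_ZZ24.symm).commute
lemma comm_ZZp_XX34 : Commute ZZp XX34 := by
  rw [ZZp_eq]; exact (SC.mul_left sc_XX34_ZZ13.symm sc_XX34_ZZ24.symm).commute
lemma comm_ZZp_ZZ13 : Commute ZZp ZZ13 := by
  rw [ZZp_eq]; exact Commute.mul_left (Commute.refl ZZ13) sc_ZZ13_ZZ24.commute.symm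
lemma comm_ZZp_ZZ24 : Commute ZZp ZZ24 := by
  rw [ZZp_eq]; exact Commute.mul_left sc_ZZ13_ZZ24.commute (Commute.refl ZZ24)

lemma mem_bsG_iU : iU (Fin 4) ∈ bsG := Subgroup.subset_closure (by simp)
lemma mem_bsG_XX12 : XX12 ∈ bsG := Subgroup.subset_closure (by simp)
lemma mem_bsG_XX34 : XX34 ∈ bsG := Subgroup.subset_closure (by simp)
lemma mem_bsG_ZZ13 : ZZ13 ∈ bsG := Subgroup.subset_closure (by simp)
lemma mem_bsG_ZZ24 : ZZ24 ∈ bsG := Subgroup.subset_closure (by simp)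

lemma mem_centralizer_bsG_of {g : (PMat (Fin 4))ˣ} (h1 : Commute XX12 g)
    (h2 : Commute XX34 g) (h3 : Commute ZZ13 g) (h4 : Commute ZZ24 g) :
    g ∈ Subgroup.centralizer (bsG : Set (PMat (Fin 4))ˣ) := by
  have hle : bsG ≤ Subgroup.centralizer {g} := by
    rw [bsG, Subgroup.closure_le]
    intro x hx
    simp only [Set.mem_insert_iff, Set.mem_singleton_iff] at hx
    rcases hx with rfl | rfl | rfl | rfl | rfl
    · exact Subgroup.mem_centralizer_singleton_iff.mpr (iU_central (Fin 4) g)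
    · exact Subgroup.mem_centralizer_singleton_iff.mpr h1.eq
    · exact Subgroup.mem_centralizer_singleton_iff.mpr h2.eq
    · exact Subgroup.mem_centralizer_singleton_iff.mpr h3.eq
    · exact Subgroup.mem_centralizer_singleton_iff.mpr h4.eq
  exact Subgroup.mem_centralizer_iff.mpr
    (fun x hx => Subgroup.mem_centralizer_singleton_iff.mp (hle hx))

lemma Hgrp_le : Hgrp ≤ Subgroup.centralizer (bsG : Set (PMat (Fin 4))ˣ) ⊓ bsG := by
  rw [Hgrp, Subgroup.closure_le]
  intro x hx
  simp only [Set.mem_insert_iff, Set.mem_singleton_iff] at hx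
  rcases hx with rfl | rfl | rfl
  · refine Subgroup.mem_inf.mpr ⟨?_, mem_bsG_iU⟩
    exact Subgroup.mem_centralizer_iff.mpr (fun y _ => (iU_central (Fin 4) y).symm)
  · refine Subgroup.mem_inf.mpr ⟨mem_centralizer_bsG_of comm_XXp_XX12.symm
      comm_XXp_XX34.symm comm_XXp_ZZ13.symm comm_XXp_ZZ24.symm, ?_⟩
    rw [XXp_eq]; exact mul_mem mem_bsG_XX12 mem_bsG_XX34
  · refine Subgroup.mem_inf.mpr ⟨mem_centralizer_bsG_of comm_ZZp_XX12.symm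
      comm_ZZp_XX34.symm comm_ZZp_ZZ13.symm comm_ZZp_ZZ24.symm, ?_⟩
    rw [ZZp_eq]; exact mul_mem mem_bsG_ZZ13 mem_bsG_ZZ24

lemma Hgrp_comm {h : (PMat (Fin 4))ˣ} (hh : h ∈ Hgrp) :
    Commute h XX12 ∧ Commute h ZZ13 := by
  induction hh using Subgroup.closure_induction with
  | mem y hy =>
    simp only [Set.mem_insert_iff, Set.mem_singleton_iff] at hy
    rcases hy with rfl | rfl | rfl
    · exact ⟨iU_central (Fin 4) XX12, iU_central (Fin 4) ZZ13⟩
    · exact ⟨comm_XXp_XX12, comm_XXp_ZZ13⟩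
    · exact ⟨comm_ZZp_XX12, comm_ZZp_ZZ13⟩
  | one => exact ⟨Commute.one_left _, Commute.one_left _⟩
  | mul a b _ _ ha hb => exact ⟨ha.1.mul_left hb.1, ha.2.mul_left hb.2⟩
  | inv a _ ha => exact ⟨ha.1.inv_left, ha.2.inv_left⟩

lemma neg_one_mem_Hgrp : (-1 : (PMat (Fin 4))ˣ) ∈ Hgrp := by
  rw [← iU_sq]
  exact mul_mem (Subgroup.subset_closure (by simp)) (Subgroup.subset_closure (by simp))

lemma hac_ZX : ZZ13 * XX12 = -(XX12 * ZZ13) := SC.ac (SC.symm sc_XX12_ZZ13)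

lemma nf_mul (b d b' d' : ℕ) :
    (XX12 ^ b * ZZ13 ^ d) * (XX12 ^ b' * ZZ13 ^ d') =
      ((-1 : (PMat (Fin 4))ˣ) ^ (d * b')) * (XX12 ^ (b + b') * ZZ13 ^ (d + d')) := by
  have hcn : Commute (XX12 ^ b) ((-1 : (PMat (Fin 4))ˣ) ^ (d * b')) :=
    (Commute.neg_one_right _).pow_right _
  calc (XX12 ^ b * ZZ13 ^ d) * (XX12 ^ b' * ZZ13 ^ d')
      = XX12 ^ b * ((ZZ13 ^ d * XX12 ^ b') * ZZ13 ^ d') := by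
        rw [mul_assoc, ← mul_assoc (ZZ13 ^ d)]
    _ = XX12 ^ b * ((((-1) ^ (d * b') * (XX12 ^ b' * ZZ13 ^ d))) * ZZ13 ^ d') := by
        rw [ac_pow_pow hac_ZX d b']
    _ = ((-1) ^ (d * b') * XX12 ^ b) * ((XX12 ^ b' * ZZ13 ^ d) * ZZ13 ^ d') := by
        rw [mul_assoc ((-1 : (PMat (Fin 4))ˣ) ^ (d * b')), ← mul_assoc, ← mul_assoc,
          hcn.eq, mul_assoc, mul_assoc, mul_assoc]
    _ = (-1) ^ (d * b') * (XX12 ^ (b + b') * ZZ13 ^ (d + d')) := by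
        rw [mul_assoc, mul_assoc (XX12 ^ b'), ← mul_assoc (XX12 ^ b), ← pow_add, ← pow_add]

/-- the subgroup of normal forms `h * XX12^b * ZZ13^d` with `h` in `Hgrp` -/
def Mgrp : Subgroup (PMat (Fin 4))ˣ where
  carrier := {u | ∃ h ∈ Hgrp, ∃ b d : ℕ, u = h * XX12 ^ b * ZZ13 ^ d}
  one_mem' := ⟨1, one_mem _, 0, 0, by simp⟩
  mul_mem' := by
    rintro u v ⟨h, hh, b, d, rfl⟩ ⟨h', hh', b', d', rfl⟩
    refine ⟨h * h' * (-1) ^ (d * b'),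
      mul_mem (mul_mem hh hh') (pow_mem neg_one_mem_Hgrp _), b + b', d + d', ?_⟩
    have hc : Commute h' (XX12 ^ b * ZZ13 ^ d) :=
      ((Hgrp_comm hh').1.pow_right b).mul_right ((Hgrp_comm hh').2.pow_right d)
    calc (h * XX12 ^ b * ZZ13 ^ d) * (h' * XX12 ^ b' * ZZ13 ^ d')
        = (h * (XX12 ^ b * ZZ13 ^ d)) * (h' * (XX12 ^ b' * ZZ13 ^ d')) := by
          rw [mul_assoc h, mul_assoc h']
      _ = h * (((XX12 ^ b * ZZ13 ^ d) * h') * (XX12 ^ b' * ZZ13 ^ d')) := by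
          rw [mul_assoc, ← mul_assoc (XX12 ^ b * ZZ13 ^ d)]
      _ = (h * h') * ((XX12 ^ b * ZZ13 ^ d) * (XX12 ^ b' * ZZ13 ^ d')) := by
          rw [hc.symm.eq, mul_assoc h', ← mul_assoc h]
      _ = (h * h') * ((-1) ^ (d * b') * (XX12 ^ (b + b') * ZZ13 ^ (d + d'))) := by
          rw [nf_mul]
      _ = h * h' * (-1) ^ (d * b') * XX12 ^ (b + b') * ZZ13 ^ (d + d') := by
          rw [← mul_assoc, mul_assoc (h * h' * (-1) ^ (d * b'))]
  inv_mem' := by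
    rintro u ⟨h, hh, b, d, rfl⟩
    refine ⟨h⁻¹ * (-1) ^ (d * b), mul_mem (inv_mem hh) (pow_mem neg_one_mem_Hgrp _), b, d, ?_⟩
    have hX : (XX12 ^ b)⁻¹ = XX12 ^ b := by
      rw [← inv_pow, inv_eq_of_mul_eq_one_right sq_XX12]
    have hZ : (ZZ13 ^ d)⁻¹ = ZZ13 ^ d := by
      rw [← inv_pow, inv_eq_of_mul_eq_one_right sq_ZZ13]
    have hc : Commute h⁻¹ (ZZ13 ^ d * XX12 ^ b) :=
      (((Hgrp_comm hh).2.pow_right d).mul_right ((Hgrp_comm hh).1.pow_right b)).inv_left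
    calc (h * XX12 ^ b * ZZ13 ^ d)⁻¹
        = (ZZ13 ^ d)⁻¹ * ((XX12 ^ b)⁻¹ * h⁻¹) := by rw [_root_.mul_inv_rev, _root_.mul_inv_rev]
      _ = (ZZ13 ^ d * XX12 ^ b) * h⁻¹ := by rw [hX, hZ, mul_assoc]
      _ = h⁻¹ * (ZZ13 ^ d * XX12 ^ b) := hc.symm.eq
      _ = h⁻¹ * ((-1) ^ (d * b) * (XX12 ^ b * ZZ13 ^ d)) := by rw [ac_pow_pow hac_ZX d b]
      _ = h⁻¹ * (-1) ^ (d * b) * XX12 ^ b * ZZ13 ^ d := by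
          rw [← mul_assoc, mul_assoc (h⁻¹ * (-1) ^ (d * b))]

lemma bsG_le_Mgrp : bsG ≤ Mgrp := by
  rw [bsG, Subgroup.closure_le]
  intro x hx
  simp only [Set.mem_insert_iff, Set.mem_singleton_iff] at hx
  have hiU : iU (Fin 4) ∈ Hgrp := Subgroup.subset_closure (by simp)
  have hXXp : XXp ∈ Hgrp := Subgroup.subset_closure (by simp)
  have hZZp : ZZp ∈ Hgrp := Subgroup.subset_closure (by simp)
  rcases hx with rfl | rfl | rfl | rfl | rfl
  · exact ⟨iU (Fin 4), hiU, 0, 0, by simp⟩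
  · exact ⟨1, one_mem _, 1, 0, by simp⟩
  · refine ⟨XXp, hXXp, 1, 0, ?_⟩
    rw [pow_one, pow_zero, mul_one, XXp_eq, mul_assoc, sc_XX12_XX34.commute.symm.eq,
      ← mul_assoc, sq_XX12, one_mul]
  · exact ⟨1, one_mem _, 0, 1, by simp⟩
  · refine ⟨ZZp, hZZp, 0, 1, ?_⟩
    rw [pow_zero, pow_one, mul_one, ZZp_eq, mul_assoc, sc_ZZ13_ZZ24.commute.symm.eq,
      ← mul_assoc, sq_ZZ13, one_mul]

lemma even_of_neg_one_pow {b : ℕ} (h : ((-1 : (PMat (Fin 4))ˣ)) ^ b = 1) : Even b := by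
  rcases Nat.even_or_odd b with he | ho
  · exact he
  · exfalso
    rw [ho.neg_one_pow] at h
    exact neg_one_ne_one_unit h

lemma pow_eq_one_of_even {p : (PMat (Fin 4))ˣ} (hp : p * p = 1) {b : ℕ} (hb : Even b) :
    p ^ b = 1 := by
  obtain ⟨r, rfl⟩ := hb
  have : r + r = 2 * r := by ring
  rw [this, pow_mul, sq, hp, one_pow]

end Aux6
section Aux7

lemma part1 :
    Subgroup.centralizer (bsG : Set (PMat (Fin 4))ˣ) ⊓ bsG =
      Subgroup.closure {iU (Fin 4)} ⊔ Subgroup.closure {XXp, ZZp} := by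
  have hrhs : Subgroup.closure {iU (Fin 4)} ⊔ Subgroup.closure {XXp, ZZp} = Hgrp := by
    rw [Hgrp, ← Subgroup.closure_union, Set.singleton_union]
  rw [hrhs]
  refine le_antisymm ?_ Hgrp_le
  intro u hu
  obtain ⟨hcent, hbs⟩ := Subgroup.mem_inf.mp hu
  obtain ⟨h, hh, b, d, rfl⟩ := bsG_le_Mgrp hbs
  have hcomm : ∀ g ∈ bsG, Commute (h * XX12 ^ b * ZZ13 ^ d) g := fun g hg =>
    (Subgroup.mem_centralizer_iff.mp hcent g hg).symm
  have hw_eq : h⁻¹ * (h * XX12 ^ b * ZZ13 ^ d) = XX12 ^ b * ZZ13 ^ d := by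
    rw [mul_assoc h, inv_mul_cancel_left]
  have hwZ : Commute (XX12 ^ b * ZZ13 ^ d) ZZ13 := by
    rw [← hw_eq]
    exact Commute.mul_left (Hgrp_comm hh).2.inv_left (hcomm ZZ13 mem_bsG_ZZ13)
  have hwX : Commute (XX12 ^ b * ZZ13 ^ d) XX12 := by
    rw [← hw_eq]
    exact Commute.mul_left (Hgrp_comm hh).1.inv_left (hcomm XX12 mem_bsG_XX12)
  -- b is even
  have e1 : (XX12 ^ b * ZZ13 ^ d) * ZZ13 = (XX12 ^ b * ZZ13) * ZZ13 ^ d := by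
    rw [mul_assoc, ((Commute.refl ZZ13).pow_left d).eq, ← mul_assoc]
  have e2 : ZZ13 * (XX12 ^ b * ZZ13 ^ d) = (-1) ^ b * ((XX12 ^ b * ZZ13) * ZZ13 ^ d) := by
    rw [← mul_assoc, ac_pow hac_ZX b, mul_assoc, mul_assoc, ← mul_assoc (XX12 ^ b)]
  have e3 := hwZ.eq
  rw [e1, e2] at e3
  have hbe : Even b := even_of_neg_one_pow (right_eq_mul.mp e3)
  -- d is even
  have hcn : Commute (XX12 ^ b) ((-1 : (PMat (Fin 4))ˣ) ^ d) :=
    (Commute.neg_one_right _).pow_right _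
  have hZX1 : ZZ13 ^ d * XX12 = (-1) ^ d * (XX12 * ZZ13 ^ d) := by
    have := ac_pow_pow hac_ZX d 1
    simpa using this
  have e1' : (XX12 ^ b * ZZ13 ^ d) * XX12 = (-1) ^ d * ((XX12 ^ b * XX12) * ZZ13 ^ d) := by
    rw [mul_assoc, hZX1, ← mul_assoc, hcn.eq, mul_assoc, ← mul_assoc (XX12 ^ b)]
  have e2' : XX12 * (XX12 ^ b * ZZ13 ^ d) = (XX12 ^ b * XX12) * ZZ13 ^ d := by
    rw [← mul_assoc, ((Commute.refl XX12).pow_right b).eq]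
  have e3' := hwX.eq
  rw [e1', e2'] at e3'
  have hde : Even d := even_of_neg_one_pow (right_eq_mul.mp e3'.symm)
  rw [pow_eq_one_of_even sq_XX12 hbe, pow_eq_one_of_even sq_ZZ13 hde, mul_one, mul_one]
  exact hh

end Aux7

/-- The period-4 schedule measuring `X₁X₂, Z₂Z₄, X₃X₄, Z₁Z₃` one at a time is not an
associated ISG code for the Bacon-Shor gauge group `G`: the center of `G` is
`⟨i·I⟩·⟨X₁X₂X₃X₄, Z₁Z₂Z₃Z₄⟩`, the instantaneous stabilizer group at time `t` is just
`⟨X₁X₂⟩`, `⟨Z₂Z₄⟩`, `⟨X₃X₄⟩` or `⟨Z₁Z₃⟩` according to `t mod 4`, and `X₁X₂X₃X₄` is never in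
`⟨i·I⟩·S_t` (so the subsystem code's stabilizer group, modulo phases, is never contained in
the instantaneous stabilizer group, modulo phases). -/
theorem badSchedule_not_associated_ISG_code :
    Subgroup.centralizer (bsG : Set (PMat (Fin 4))ˣ) ⊓ bsG =
      Subgroup.closure {iU (Fin 4)} ⊔
        Subgroup.closure {XU (Fin 4) 0 * XU (Fin 4) 1 * XU (Fin 4) 2 * XU (Fin 4) 3,
          ZU (Fin 4) 0 * ZU (Fin 4) 1 * ZU (Fin 4) 2 * ZU (Fin 4) 3} ∧
    (∀ t, badISG t = Subgroup.closure {badMeas t}) ∧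
    (∀ t, XU (Fin 4) 0 * XU (Fin 4) 1 * XU (Fin 4) 2 * XU (Fin 4) 3 ∉
      Subgroup.closure {iU (Fin 4)} ⊔ badISG t) :=
  ⟨part1, badISG_eq, part3⟩

end
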